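/- Let n ≥ 2 be an integer, c > 0, and r, σ real numbers with 1 < r < n and 0 < σ < (r−1)c. For δ ∈ (0,1) define π0C = (r−1)c and π0D(δ) = (1−δ)·((n−1)rc/n + δσ) + δ²(r−1)c. If r > (σ+2c)n/((n+1)c), then there exists δ₀ ∈ (0,1) such that for all δ ∈ (δ₀,1): π0C ≥ π0D(δ). Conversely, if r < (σ+2c)n/((n+1)c), then there exists δ₀ ∈ (0,1) such that for all δ ∈ (δ₀,1): π0C < π0D(δ). -/

import Mathlib

/-!
Expanding `π0D`, the gain from cooperating factors as
`π0C - π0D(δ) = (1 - δ) · m(δ)` with `m = deviationMargin` affine in `δ`, so for `δ` just below `1` its sign is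
that of `m(1)`; and `n · m(1) = r (n + 1) c - (σ + 2c) n`.
-/

open Filter Topology Set

theorem exists_Ioo_forall_of_eventually_nhdsLT {P : ℝ → Prop} {a b : ℝ} (hab : a < b)
    (hP : ∀ᶠ x in 𝓝[<] b, P x) : ∃ x₀ ∈ Ioo a b, ∀ x ∈ Ioo x₀ b, P x := by
  obtain ⟨l, hlb, hsub⟩ := mem_nhdsLT_iff_exists_Ioo_subset.mp hP
  refine ⟨max l ((a + b) / 2), ⟨?_, max_lt hlb (by linarith)⟩, ?_⟩
  · exact lt_max_of_lt_right (by linarith)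
  · exact fun x hx => hsub ⟨(le_max_left _ _).trans_lt hx.1, hx.2⟩

theorem eventually_nhdsLT_pos_mul_of_pos {g : ℝ → ℝ} {b : ℝ} (hg : ContinuousAt g b)
    (hb : 0 < g b) : ∀ᶠ x in 𝓝[<] b, 0 < (b - x) * g x := by
  filter_upwards [nhdsWithin_le_nhds (continuousAt_const.eventually_lt hg hb),
    self_mem_nhdsWithin] with x hgx hxb
  exact mul_pos (sub_pos.mpr hxb) hgx

theorem eventually_nhdsLT_mul_neg_of_neg {g : ℝ → ℝ} {b : ℝ} (hg : ContinuousAt g b)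
    (hb : g b < 0) : ∀ᶠ x in 𝓝[<] b, (b - x) * g x < 0 := by
  filter_upwards [eventually_nhdsLT_pos_mul_of_pos hg.neg (neg_pos.mpr hb)] with x hx
  simpa only [Pi.neg_apply, mul_neg, neg_pos] using hx

noncomputable def deviationMargin (n c r σ δ : ℝ) : ℝ :=
  (1 + δ) * (r - 1) * c - (n - 1) * r * c / n - δ * σ

theorem sub_payoffDeviate_eq (n c r σ δ : ℝ) :
    (r - 1) * c - ((1 - δ) * ((n - 1) * r * c / n + δ * σ) + δ ^ 2 * (r - 1) * c)
      = (1 - δ) * deviationMargin n c r σ δ := by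
  unfold deviationMargin
  ring

theorem continuous_deviationMargin (n c r σ : ℝ) : Continuous (deviationMargin n c r σ) := by
  unfold deviationMargin
  fun_prop

theorem mul_deviationMargin_one {n : ℝ} (hn : n ≠ 0) (c r σ : ℝ) :
    n * deviationMargin n c r σ 1 = r * ((n + 1) * c) - (σ + 2 * c) * n := by
  unfold deviationMargin
  field_simp
  ring

theorem rows13_14_state0_condition_general (n : ℕ) (hn : 2 ≤ n) (c r σ : ℝ)
    (hc : 0 < c) :
    (r > (σ + 2 * c) * n / (((n : ℝ) + 1) * c) →
      ∃ δ₀ ∈ Set.Ioo (0 : ℝ) 1, ∀ δ ∈ Set.Ioo δ₀ 1,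
        (r - 1) * c ≥
          (1 - δ) * (((n : ℝ) - 1) * r * c / n + δ * σ)
            + δ ^ 2 * (r - 1) * c) ∧
    (r < (σ + 2 * c) * n / (((n : ℝ) + 1) * c) →
      ∃ δ₀ ∈ Set.Ioo (0 : ℝ) 1, ∀ δ ∈ Set.Ioo δ₀ 1,
        (r - 1) * c <
          (1 - δ) * (((n : ℝ) - 1) * r * c / n + δ * σ)
            + δ ^ 2 * (r - 1) * c) := by
  have hn0 : (0 : ℝ) < n := Nat.cast_pos.mpr (by omega)
  have hden : (0 : ℝ) < ((n : ℝ) + 1) * c := by positivity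
  have hm1 := mul_deviationMargin_one hn0.ne' c r σ
  have hm := (continuous_deviationMargin (n : ℝ) c r σ).continuousAt (x := 1)
  constructor
  · intro h
    have hpos : 0 < deviationMargin n c r σ 1 := by
      nlinarith [(div_lt_iff₀ hden).mp h]
    obtain ⟨δ₀, hδ₀, hgap⟩ := exists_Ioo_forall_of_eventually_nhdsLT one_pos
      (eventually_nhdsLT_pos_mul_of_pos hm hpos)
    refine ⟨δ₀, hδ₀, fun δ hδ => ?_⟩
    linarith [hgap δ hδ, sub_payoffDeviate_eq n c r σ δ]
  · intro h
    have hneg : deviationMargin n c r σ 1 < 0 := by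
      nlinarith [(lt_div_iff₀ hden).mp h]
    obtain ⟨δ₀, hδ₀, hgap⟩ := exists_Ioo_forall_of_eventually_nhdsLT one_pos
      (eventually_nhdsLT_mul_neg_of_neg hm hneg)
    refine ⟨δ₀, hδ₀, fun δ hδ => ?_⟩
    linarith [hgap δ hδ, sub_payoffDeviate_eq n c r σ δ]

/-- State-0 no-deviation condition of Table S1, rows 13–14: for `δ` close
enough to 1, sticking to cooperation is at least as good as a one-shot
deviation to defection iff `r ≥ (σ+2c)n/((n+1)c)` (strict versions). -/
theorem rows13_14_state0_condition (n : ℕ) (hn : 2 ≤ n) (c r σ : ℝ)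
    (hc : 0 < c) (hr1 : 1 < r) (hrn : r < (n : ℝ))
    (hσ0 : 0 < σ) (hσ : σ < (r - 1) * c) :
    (r > (σ + 2 * c) * n / (((n : ℝ) + 1) * c) →
      ∃ δ₀ ∈ Set.Ioo (0 : ℝ) 1, ∀ δ ∈ Set.Ioo δ₀ 1,
        (r - 1) * c ≥
          (1 - δ) * (((n : ℝ) - 1) * r * c / n + δ * σ)
            + δ ^ 2 * (r - 1) * c) ∧
    (r < (σ + 2 * c) * n / (((n : ℝ) + 1) * c) →
      ∃ δ₀ ∈ Set.Ioo (0 : ℝ) 1, ∀ δ ∈ Set.Ioo δ₀ 1,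
        (r - 1) * c <
          (1 - δ) * (((n : ℝ) - 1) * r * c / n + δ * σ)
            + δ ^ 2 * (r - 1) * c) :=
  rows13_14_state0_condition_general n hn c r σ hc
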